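/- Let ⟨E,Φ⟩ be a symmetric bilinear space over a finite field F whose dimension κ has uncountable cofinality. If the splitting number 𝔰 satisfies 𝔰 > κ, then ⟨E,Φ⟩ is not a Gross space; that is, there exists a subspace U of infinite (countable) dimension with dim U^⊥ = κ. -/

import Mathlib

/-- The orthogonal complement of a subspace with respect to a bilinear form. -/
def ortho {F E : Type} [Field F] [AddCommGroup E] [Module F E]
    (Φ : E →ₗ[F] E →ₗ[F] F) (U : Submodule F E) : Submodule F E where
  carrier := {x | ∀ y ∈ U, Φ x y = 0}
  add_mem' := by
    intro a b ha hb y hy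
    simp [map_add, ha y hy, hb y hy]
  zero_mem' := by
    intro y hy; simp
  smul_mem' := by
    intro c x hx y hy
    simp [hx y hy]

/-- The splitting number 𝔰: the least cardinality of a splitting family on ω. -/
noncomputable def splittingNumber : Cardinal :=
  sInf { c | ∃ S : Set (Set ℕ), Cardinal.mk S = c ∧
    ∀ A : Set ℕ, A.Infinite → ∃ s ∈ S, (A ∩ s).Infinite ∧ (A \ s).Infinite }

/-!
Fix countably many basis vectors `e_n`. The sets `{n | Φ (e_α, e_n) = c}`, for `α` a basis index
and `c ∈ F`, are only `κ · |F| = κ < 𝔰` many, so some infinite `A ⊆ ℕ` is split by none of them: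
along `A` each `n ↦ Φ (e_α, e_n)` is eventually constant, from some threshold `N_α` on. Since
`cf κ > ω`, there are `κ` many `α` sharing one threshold `k`, and the differences of consecutive
pairs of vectors `e_n` (`n ∈ A`) beyond `k` span a subspace of dimension `ℵ₀` orthogonal to these
`κ` basis vectors.
-/

open Cardinal Filter Function Submodule

lemma exists_infinite_unsplit_of_mk_lt_splittingNumber {S : Set (Set ℕ)}
    (hS : #S < splittingNumber) :
    ∃ A : Set ℕ, A.Infinite ∧ ∀ s ∈ S, (A ∩ s).Finite ∨ (A \ s).Finite := by
  by_contra! h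
  exact hS.not_ge (csInf_le' ⟨S, rfl, h⟩)

lemma Set.Infinite.exists_diff_preimage_singleton_finite {α C : Type*} [Finite C] {A : Set α}
    (hA : A.Infinite) (f : α → C)
    (hunsplit : ∀ c, (A ∩ f ⁻¹' {c}).Finite ∨ (A \ f ⁻¹' {c}).Finite) :
    ∃ c, (A \ f ⁻¹' {c}).Finite := by
  obtain ⟨c, hc⟩ : ∃ c, (A ∩ f ⁻¹' {c}).Infinite := by
    by_contra! h
    exact hA ((Set.finite_iUnion h).subset fun a ha => Set.mem_iUnion.2 ⟨f a, ha, rfl⟩)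
  exact ⟨c, (hunsplit c).resolve_left hc⟩

lemma exists_strictMono_eventually_const_of_mk_lt_splittingNumber {ι C : Type} [Finite C]
    (f : ι → ℕ → C) (hs : #(ι × C) < splittingNumber) :
    ∃ b : ℕ → ℕ, StrictMono b ∧ ∀ α, ∃ c, ∀ᶠ n in atTop, f α (b n) = c := by
  obtain ⟨A, hA, hunsplit⟩ := exists_infinite_unsplit_of_mk_lt_splittingNumber
    (S := Set.range fun p : ι × C => f p.1 ⁻¹' {p.2}) (mk_range_le.trans_lt hs)
  refine ⟨Nat.nth (· ∈ A), Nat.nth_strictMono hA, fun α => ?_⟩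
  obtain ⟨c, hc⟩ := hA.exists_diff_preimage_singleton_finite (f α)
    fun c => hunsplit _ ⟨(α, c), rfl⟩
  have hcof : ∀ᶠ n in atTop, n ∉ A \ f α ⁻¹' {c} := by
    rw [← Nat.cofinite_eq_atTop]
    exact hc.eventually_cofinite_notMem
  refine ⟨c, ((Nat.nth_strictMono hA).tendsto_atTop.eventually hcof).mono fun n hn => ?_⟩
  by_contra hne
  exact hn ⟨Nat.nth_mem_of_infinite hA n, hne⟩

lemma exists_strictMono_const_on_large_set {ι C : Type} [Finite C] (f : ι → ℕ → C)
    (hs : #(ι × C) < splittingNumber) (hcof : ℵ₀ < (#ι).ord.cof) :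
    ∃ j : ℕ → ℕ, StrictMono j ∧
      ∃ T : Set ι, #T = #ι ∧ ∀ α ∈ T, ∀ m n, f α (j m) = f α (j n) := by
  obtain ⟨b, hb, hconst⟩ := exists_strictMono_eventually_const_of_mk_lt_splittingNumber f hs
  simp only [eventually_atTop] at hconst
  choose c N hN using hconst
  obtain ⟨k, hk⟩ := infinite_pigeonhole N (hcof.le.trans (Ordinal.cof_ord_le _))
    (by rwa [mk_nat])
  refine ⟨fun m => b (k + m), hb.comp fun m n h => by omega, _, hk,
    fun α (hα : N α = k) m n => ?_⟩
  rw [hN α (k + m) (by omega), hN α (k + n) (by omega)]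

lemma linearIndependent_sub_pairs {R M ι : Type*} [CommRing R] [AddCommGroup M] [Module R M]
    (B : Module.Basis ι R M) {j : ℕ → ι} (hj : Injective j) :
    LinearIndependent R fun n => B (j (2 * n)) - B (j (2 * n + 1)) := by
  classical
  refine LinearIndependent.of_pairwise_dual_eq_zero_one _ (fun n => B.coord (j (2 * n)))
    (fun m n hmn => ?_) fun n => ?_
  · simp [hj.eq_iff, hmn.symm, show 2 * n + 1 ≠ 2 * m by omega]
  · simp [hj.eq_iff]

section Ortho

variable {F E : Type} [Field F] [AddCommGroup E] [Module F E] (Φ : E →ₗ[F] E →ₗ[F] F)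

lemma mem_ortho_span_iff {s : Set E} {x : E} :
    x ∈ ortho Φ (span F s) ↔ ∀ y ∈ s, Φ x y = 0 :=
  span_le (p := LinearMap.ker (Φ x))

lemma exists_rank_eq_aleph0_and_mk_le_rank_ortho {ι : Type} (B : Module.Basis ι F E)
    {j : ℕ → ι} (hj : Injective j) (T : Set ι)
    (hT : ∀ α ∈ T, ∀ m n, Φ (B α) (B (j m)) = Φ (B α) (B (j n))) :
    ∃ U : Submodule F E, Module.rank F U = ℵ₀ ∧ #T ≤ Module.rank F (ortho Φ U) := by
  set u : ℕ → E := fun n => B (j (2 * n)) - B (j (2 * n + 1))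
  have hu : LinearIndependent F u := linearIndependent_sub_pairs B hj
  refine ⟨span F (Set.range u), by rw [rank_span hu, mk_range_eq _ hu.injective, mk_nat], ?_⟩
  have hTU : span F (Set.range fun α : T => B α) ≤ ortho Φ (span F (Set.range u)) := by
    rw [span_le]
    rintro _ ⟨⟨α, hα⟩, rfl⟩
    rw [SetLike.mem_coe, mem_ortho_span_iff]
    rintro _ ⟨n, rfl⟩
    simp only [u, map_sub, hT α hα (2 * n) (2 * n + 1), sub_self]
  have hB : LinearIndependent F fun α : T => B α :=
    B.linearIndependent.comp _ Subtype.val_injective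
  calc #T = Module.rank F (span F (Set.range fun α : T => B α)) := by
        rw [rank_span hB, mk_range_eq _ hB.injective]
    _ ≤ _ := rank_mono hTU

end Ortho

theorem not_gross_of_splitting_gt_general {F E : Type} [Field F] [Finite F]
    [AddCommGroup E] [Module F E]
    (Φ : E →ₗ[F] E →ₗ[F] F)
    (κ : Cardinal) (hκ : Module.rank F E = κ)
    (hcof : Cardinal.aleph0 < κ.ord.cof)
    (hs : κ < splittingNumber) :
    ∃ U : Submodule F E, Module.rank F U = Cardinal.aleph0 ∧
      Module.rank F (ortho Φ U) = κ := by
  have hκ_inf : ℵ₀ < κ := hcof.trans_le (Ordinal.cof_ord_le κ)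
  obtain ⟨ι, B⟩ : (ι : Type) × Module.Basis ι F E := ⟨_, Module.Basis.ofVectorSpace F E⟩
  have hmk : #ι = κ := by rw [B.mk_eq_rank'', hκ]
  have : Infinite ι := by rw [infinite_iff, hmk]; exact hκ_inf.le
  let g := Infinite.natEmbedding ι
  have hprod : #(ι × F) < splittingNumber := by
    rwa [mk_prod, lift_id, lift_id, hmk,
      Cardinal.mul_eq_left hκ_inf.le ((lt_aleph0_of_finite F).le.trans hκ_inf.le) (mk_ne_zero F)]
  obtain ⟨j, hj, T, hT, hconst⟩ := exists_strictMono_const_on_large_set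
    (fun α n => Φ (B α) (B (g n))) hprod (hmk ▸ hcof)
  obtain ⟨U, hU, hTU⟩ :=
    exists_rank_eq_aleph0_and_mk_le_rank_ortho Φ B (g.injective.comp hj.injective) T hconst
  exact ⟨U, hU, le_antisymm (hκ ▸ Submodule.rank_le _) (hmk ▸ hT ▸ hTU)⟩

/-- If E is a symmetric bilinear space over a finite field, its dimension κ has
uncountable cofinality, and 𝔰 > κ, then E is not Gross: some countably infinite
dimensional subspace has orthogonal complement of full dimension κ. -/
theorem not_gross_of_splitting_gt {F E : Type} [Field F] [Finite F]
    [AddCommGroup E] [Module F E]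
    (Φ : E →ₗ[F] E →ₗ[F] F) (hsymm : ∀ x y, Φ x y = Φ y x)
    (κ : Cardinal) (hκ : Module.rank F E = κ)
    (hcof : Cardinal.aleph0 < κ.ord.cof)
    (hs : κ < splittingNumber) :
    ∃ U : Submodule F E, Module.rank F U = Cardinal.aleph0 ∧
      Module.rank F (ortho Φ U) = κ :=
  not_gross_of_splitting_gt_general Φ κ hκ hcof hs
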